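/- Let X be a Hermitian operator and σ a positive definite operator on a finite-dimensional Hilbert space A. Then ‖X‖₁ ≤ √(Tr σ) · ‖σ^{−1/4} X σ^{−1/4}‖₂, where ‖·‖₁ is the trace norm and ‖·‖₂ the Hilbert–Schmidt norm. -/

import Mathlib

/-! Let `S` be the sign of `X`, a unitary with `S X = |X|`, and `R = σ^{1/4}`. Then
`‖X‖₁ = Tr (S X) = Tr ((R S R) (σ^{-1/4} X σ^{-1/4}))`, which the Cauchy–Schwarz inequality for
the Hilbert–Schmidt inner product bounds by `‖R S R‖₂ ‖σ^{-1/4} X σ^{-1/4}‖₂`. Cauchy–Schwarz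
once more, together with unitary invariance, gives
`‖R S R‖₂² = Tr ((S* R²) (S R²)) ≤ ‖S* R²‖₂ ‖S R²‖₂ = ‖R²‖₂² = Tr σ`. -/

open scoped ComplexOrder

namespace Matrix.PosSemidef
variable {n 𝕜 : Type*} [Fintype n] [RCLike 𝕜] [DecidableEq n] {A : Matrix n n 𝕜}
noncomputable def sqrt (hA : A.PosSemidef) : Matrix n n 𝕜 :=
  hA.1.eigenvectorUnitary.1 * diagonal ((↑) ∘ (√·) ∘ hA.1.eigenvalues) *
  (star hA.1.eigenvectorUnitary : Matrix n n 𝕜)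
lemma posSemidef_sqrt (hA : A.PosSemidef) : PosSemidef hA.sqrt := by
  apply PosSemidef.mul_mul_conjTranspose_same
  refine posSemidef_diagonal_iff.mpr fun i ↦ ?_
  rw [Function.comp_apply, RCLike.nonneg_iff]
  constructor
  · simp only [RCLike.ofReal_re]
    exact Real.sqrt_nonneg _
  · simp only [RCLike.ofReal_im]
end Matrix.PosSemidef

/-- The trace norm `‖M‖₁ = Tr √(MᴴM)`. -/
noncomputable def traceNorm {n : Type*} [Fintype n] [DecidableEq n]
    (M : Matrix n n ℂ) : ℝ :=
  ((Matrix.posSemidef_conjTranspose_mul_self M).sqrt).trace.re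

/-- The Hilbert–Schmidt norm `‖M‖₂ = √(Tr(MᴴM))`. -/
noncomputable def hsNorm {n : Type*} [Fintype n] (M : Matrix n n ℂ) : ℝ :=
  Real.sqrt ((M.conjTranspose * M).trace.re)

/-- The inverse fourth root `σ^{-1/4}` of a positive definite matrix `σ`, obtained as the
positive square root of the positive square root of `σ⁻¹`. -/
noncomputable def invFourthRoot {n : Type*} [Fintype n] [DecidableEq n]
    {σ : Matrix n n ℂ} (hσ : σ.PosDef) : Matrix n n ℂ :=
  hσ.inv.posSemidef.posSemidef_sqrt.sqrt

namespace Matrix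

variable {n 𝕜 : Type*} [Fintype n] [DecidableEq n] [RCLike 𝕜]

lemma PosDef.isUnit_det {A : Matrix n n 𝕜} (hA : A.PosDef) : IsUnit A.det :=
  (isUnit_iff_isUnit_det A).mp hA.isUnit

lemma PosSemidef.sqrt_eq_cfc {A : Matrix n n 𝕜} (hA : A.PosSemidef) :
    hA.sqrt = cfc Real.sqrt A := by
  rw [hA.1.cfc_eq, IsHermitian.cfc, Unitary.conjStarAlgAut_apply]
  rfl

lemma PosSemidef.sqrt_mul_sqrt {A : Matrix n n 𝕜} (hA : A.PosSemidef) :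
    hA.sqrt * hA.sqrt = A := by
  rw [hA.sqrt_eq_cfc, ← cfc_mul Real.sqrt Real.sqrt A]
  conv_rhs => rw [← cfc_id' ℝ A hA.1.isSelfAdjoint]
  refine cfc_congr fun x hx => Real.mul_self_sqrt ?_
  rw [hA.1.spectrum_real_eq_range_eigenvalues] at hx
  obtain ⟨i, rfl⟩ := hx
  exact hA.eigenvalues_nonneg i

lemma IsHermitian.exists_unitary_mul_eq_sqrt {X : Matrix n n 𝕜} (hX : X.IsHermitian) :
    ∃ S ∈ unitary (Matrix n n 𝕜), S * X = (posSemidef_conjTranspose_mul_self X).sqrt := by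
  have hcont (f : ℝ → ℝ) : ContinuousOn f (spectrum ℝ X) := X.finite_real_spectrum.continuousOn f
  let s : ℝ → ℝ := fun x => if x < 0 then -1 else 1
  refine ⟨cfc s X, ?_, ?_⟩
  · have hss : cfc s X * cfc s X = 1 := by
      rw [← cfc_mul s s X (hcont s) (hcont s), ← cfc_const_one ℝ X]
      exact cfc_congr fun x _ => by by_cases h : x < 0 <;> simp [s, h]
    have hS : star (cfc s X) = cfc s X := (cfc_predicate s X).star_eq
    rw [Unitary.mem_iff, hS, hss, and_self]
  · rw [PosSemidef.sqrt_eq_cfc, hX.eq, ← sq, ← cfc_comp_pow Real.sqrt 2 X]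
    nth_rw 2 [← cfc_id' ℝ X hX.isSelfAdjoint]
    rw [← cfc_mul s _ X (hcont s)]
    exact cfc_congr fun x _ => by
      by_cases h : x < 0 <;> simp [s, h, Real.sqrt_sq_eq_abs, abs_of_neg, not_lt.mp]

end Matrix

section HilbertSchmidt

open Matrix

variable {n : Type*} [Fintype n]

lemma hsNorm_conjTranspose (A : Matrix n n ℂ) : hsNorm Aᴴ = hsNorm A := by
  rw [hsNorm, hsNorm, conjTranspose_conjTranspose, trace_mul_comm]

lemma re_trace_mul_le_hsNorm_mul_hsNorm (A B : Matrix n n ℂ) :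
    (A * B).trace.re ≤ hsNorm A * hsNorm B := by
  classical
  -- the inner product that Mathlib induces from the matrix `1` is `⟪A, B⟫ = Tr (B Aᴴ)`
  let := toMatrixSeminormedAddCommGroup (1 : Matrix n n ℂ) PosSemidef.one
  let := toMatrixInnerProductSpace (1 : Matrix n n ℂ) PosSemidef.one
  have hnorm (M : Matrix n n ℂ) : ‖M‖ = hsNorm M := by
    rw [norm_eq_sqrt_re_inner (𝕜 := ℂ), hsNorm]
    change √(M * 1 * Mᴴ).trace.re = _
    rw [Matrix.mul_one, trace_mul_comm]
  calc (A * B).trace.re = RCLike.re (inner ℂ Aᴴ B) := by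
        change _ = (B * 1 * Aᴴᴴ).trace.re
        rw [Matrix.mul_one, conjTranspose_conjTranspose, trace_mul_comm]
    _ ≤ ‖Aᴴ‖ * ‖B‖ := re_inner_le_norm _ _
    _ = hsNorm A * hsNorm B := by rw [hnorm, hnorm, hsNorm_conjTranspose]

variable [DecidableEq n]

lemma hsNorm_unitary_mul {U : Matrix n n ℂ} (hU : U ∈ unitary (Matrix n n ℂ)) (A : Matrix n n ℂ) :
    hsNorm (U * A) = hsNorm A := by
  rw [hsNorm, hsNorm, conjTranspose_mul, Matrix.mul_assoc, ← Matrix.mul_assoc Uᴴ,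
    ← star_eq_conjTranspose U, Unitary.star_mul_self_of_mem hU, Matrix.one_mul]

lemma hsNorm_mul_unitary_mul_le {R U : Matrix n n ℂ} (hR : R.IsHermitian)
    (hU : U ∈ unitary (Matrix n n ℂ)) : hsNorm (R * U * R) ≤ hsNorm (R * R) := by
  have key : ((R * U * R)ᴴ * (R * U * R)).trace.re ≤ hsNorm (R * R) ^ 2 := calc
    _ = (star U * (R * R) * (U * (R * R))).trace.re := by
      rw [conjTranspose_mul, conjTranspose_mul, hR.eq, ← star_eq_conjTranspose]
      simp only [Matrix.mul_assoc]
      rw [trace_mul_comm R]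
      simp only [Matrix.mul_assoc]
    _ ≤ hsNorm (star U * (R * R)) * hsNorm (U * (R * R)) := re_trace_mul_le_hsNorm_mul_hsNorm _ _
    _ = hsNorm (R * R) ^ 2 := by
      rw [hsNorm_unitary_mul (Unitary.star_mem hU), hsNorm_unitary_mul hU, sq]
  exact Real.sqrt_le_iff.mpr ⟨Real.sqrt_nonneg _, key⟩

lemma re_trace_unitary_mul_le {R U : Matrix n n ℂ} (hR : R.IsHermitian)
    (hU : U ∈ unitary (Matrix n n ℂ)) (Y : Matrix n n ℂ) :
    (U * (R * Y * R)).trace.re ≤ hsNorm (R * R) * hsNorm Y := calc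
  _ = (R * U * R * Y).trace.re := by
    simp only [← Matrix.mul_assoc]
    rw [trace_mul_comm]
    simp only [Matrix.mul_assoc]
  _ ≤ hsNorm (R * U * R) * hsNorm Y := re_trace_mul_le_hsNorm_mul_hsNorm _ _
  _ ≤ hsNorm (R * R) * hsNorm Y :=
    mul_le_mul_of_nonneg_right (hsNorm_mul_unitary_mul_le hR hU) (Real.sqrt_nonneg _)

end HilbertSchmidt

section InvFourthRoot

open Matrix

variable {n : Type*} [Fintype n] [DecidableEq n] {σ : Matrix n n ℂ} (hσ : σ.PosDef)

lemma isHermitian_invFourthRoot : (invFourthRoot hσ).IsHermitian :=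
  (PosSemidef.posSemidef_sqrt _).1

lemma invFourthRoot_pow_four : invFourthRoot hσ ^ 4 = σ⁻¹ := by
  rw [show 4 = 2 * 2 from rfl, pow_mul, sq, sq, invFourthRoot, PosSemidef.sqrt_mul_sqrt,
    PosSemidef.sqrt_mul_sqrt]

lemma isUnit_det_invFourthRoot : IsUnit (invFourthRoot hσ).det := by
  have h : IsUnit (invFourthRoot hσ ^ 4).det := by
    rw [invFourthRoot_pow_four]
    exact isUnit_nonsing_inv_det _ hσ.isUnit_det
  rwa [det_pow, isUnit_pow_iff four_ne_zero] at h

lemma inv_invFourthRoot_pow_four : (invFourthRoot hσ)⁻¹ ^ 4 = σ := by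
  rw [inv_pow', invFourthRoot_pow_four, nonsing_inv_nonsing_inv _ hσ.isUnit_det]

end InvFourthRoot

/-- For a Hermitian operator `X` and a positive definite operator `σ` on a
finite-dimensional Hilbert space, `‖X‖₁ ≤ √(Tr σ) · ‖σ^{−1/4} X σ^{−1/4}‖₂`. -/
theorem traceNorm_le_sqrt_trace_mul_hsNorm {n : Type*} [Fintype n] [DecidableEq n]
    (X σ : Matrix n n ℂ) (hX : X.IsHermitian) (hσ : σ.PosDef) :
    traceNorm X ≤
      Real.sqrt (σ.trace.re) * hsNorm (invFourthRoot hσ * X * invFourthRoot hσ) := by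
  obtain ⟨S, hS, hSX⟩ := hX.exists_unitary_mul_eq_sqrt
  set F := invFourthRoot hσ
  have hF : IsUnit F.det := isUnit_det_invFourthRoot hσ
  have hX_eq : F⁻¹ * (F * X * F) * F⁻¹ = X := by
    simp only [← Matrix.mul_assoc, Matrix.nonsing_inv_mul F hF, Matrix.one_mul]
    rw [Matrix.mul_assoc, Matrix.mul_nonsing_inv F hF, Matrix.mul_one]
  have hσ_eq : (F⁻¹ * F⁻¹).conjTranspose * (F⁻¹ * F⁻¹) = σ := by
    rw [Matrix.conjTranspose_mul, (isHermitian_invFourthRoot hσ).inv.eq, ← sq, ← sq, ← pow_mul,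
      inv_invFourthRoot_pow_four]
  calc traceNorm X = (S * X).trace.re := by rw [traceNorm, ← hSX]
    _ = (S * (F⁻¹ * (F * X * F) * F⁻¹)).trace.re := by rw [hX_eq]
    _ ≤ hsNorm (F⁻¹ * F⁻¹) * hsNorm (F * X * F) :=
      re_trace_unitary_mul_le (isHermitian_invFourthRoot hσ).inv hS _
    _ = √σ.trace.re * hsNorm (F * X * F) := by rw [hsNorm, hσ_eq]
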